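/- Let G be a connected simple graph. Every shortest even cycle of G (a cycle of minimum length among all even-length cycles) either is a fundamental cycle of a BFS tree rooted at one of its vertices, or is the edge-symmetric-difference of two fundamental cycles of BFS trees of G. -/

import Mathlib

/-!
Call a cycle `c` based at `x` geodesic from its start if every vertex of `c` is as far from `x`
in `G` as along the shorter arc of `c`. For such a cycle, send each other vertex of `c` to its
neighbour on that shorter arc, and each vertex off `c` to some neighbour closer to `x`: the
resulting parent graph is a BFS tree rooted at `x`, and `c` is the fundamental cycle of its
middle edge.

Otherwise two vertices of `c` are joined by a walk shorter than their distance along `c`, and a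
shortest such walk is a path meeting `c` only at its ends. It cuts `c` into two strictly shorter
cycles whose edge sets have symmetric difference `E(c)` and whose lengths add up to `|c|`
modulo 2. A cycle shorter than a shortest even cycle is odd, so it cannot be cut this way without
producing an even cycle shorter still: it is geodesic from its start. Hence the two pieces of a
shortest even cycle which is not itself geodesic are fundamental cycles of BFS trees.
-/

open SimpleGraph

/-- `T` is a breadth-first-search (distance-preserving) spanning tree of `G` rooted at `x`. -/
def IsBFSTree {V : Type*} (G T : SimpleGraph V) (x : V) : Prop :=
  T ≤ G ∧ T.IsTree ∧ ∀ v : V, T.dist x v = G.dist x v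

/-- `c` is the fundamental cycle of the non-tree edge `e` with respect to `T`. -/
def IsFundCycle {V : Type*} (G T : SimpleGraph V) {a : V} (c : G.Walk a a)
    (e : Sym2 V) : Prop :=
  c.IsCycle ∧ e ∈ G.edgeSet ∧ e ∉ T.edgeSet ∧ e ∈ c.edges ∧
    ∀ f ∈ c.edges, f = e ∨ f ∈ T.edgeSet

def Nat.cyclicDist (m a b : ℕ) : ℕ := min (Nat.dist a b) (m - Nat.dist a b)

lemma Nat.cyclicDist_comm (m a b : ℕ) : Nat.cyclicDist m a b = Nat.cyclicDist m b a := by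
  simp only [Nat.cyclicDist, Nat.dist_comm]

lemma Nat.cyclicDist_triangle {m a b c : ℕ} (ha : a ≤ m) (hb : b ≤ m) (hc : c ≤ m) :
    Nat.cyclicDist m a c ≤ Nat.cyclicDist m a b + Nat.cyclicDist m b c := by
  simp only [Nat.cyclicDist, Nat.dist]
  omega

lemma Nat.cyclicDist_of_lt {m a b : ℕ} (h : a < b) :
    Nat.cyclicDist m a b = min (b - a) (m - (b - a)) := by
  simp only [Nat.cyclicDist, Nat.dist]
  omega

namespace SimpleGraph

variable {V : Type*} {G : SimpleGraph V}

theorem isAcyclic_of_unique_lower_neighbor (h : V → ℕ) (hne : ∀ ⦃u w⦄, G.Adj u w → h u ≠ h w)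
    (huniq : ∀ ⦃u w w'⦄, G.Adj u w → G.Adj u w' → h w < h u → h w' < h u → w = w') :
    G.IsAcyclic := by
  classical
  intro v c hc
  obtain ⟨u, hu, hmax⟩ := c.support.toFinset.exists_max_image h ⟨v, by simp⟩
  rw [List.mem_toFinset] at hu
  have hc' := hc.rotate hu
  have hlower : ∀ w, G.Adj u w → w ∈ (c.rotate u hu).support → h w < h u := fun w huw hw =>
    (hmax w (by simpa using hw)).lt_of_ne (hne huw).symm
  have h₁ := c.rotate u hu |>.adj_snd hc'.not_nil
  have h₂ := (c.rotate u hu |>.adj_penultimate hc'.not_nil).symm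
  exact hc'.snd_ne_penultimate <| huniq h₁ h₂ (hlower _ h₁ (Walk.getVert_mem_support _ _))
    (hlower _ h₂ (Walk.getVert_mem_support _ _))

def IsBFSParent (G : SimpleGraph V) (x v w : V) : Prop :=
  G.Adj v w ∧ G.dist x w + 1 = G.dist x v

def IsBFSParentMap (G : SimpleGraph V) (x : V) (par : V → V) : Prop :=
  ∀ v, v ≠ x → G.IsBFSParent x v (par v)

def parentGraph (x : V) (par : V → V) : SimpleGraph V :=
  fromRel fun v w => v ≠ x ∧ w = par v

lemma Connected.exists_isBFSParent (hG : G.Connected) {x v : V} (hv : v ≠ x) :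
    ∃ w, G.IsBFSParent x v w := by
  obtain ⟨p, hp⟩ := hG.exists_walk_length_eq_dist x v
  have hnil : ¬ p.Nil := fun h => hv h.eq.symm
  have hadj := p.adj_penultimate hnil
  have hlen : 0 < p.length := Walk.not_nil_iff_lt_length.mp hnil
  have hle : G.dist x p.penultimate ≤ p.length - 1 := by
    simpa [Walk.dropLast] using dist_le p.dropLast
  have hge : G.dist x v ≤ G.dist x p.penultimate + 1 :=
    (dist_eq_one_iff_adj.mpr hadj) ▸ hG.dist_triangle
  exact ⟨p.penultimate, hadj.symm, by omega⟩

lemma Connected.exists_isBFSParentMap_extend (hG : G.Connected) {x : V} {ι : Type*}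
    {v w : ι → V} (hv : v.Injective) (hvw : ∀ i, G.IsBFSParent x (v i) (w i)) :
    ∃ par, G.IsBFSParentMap x par ∧ ∀ i, par (v i) = w i := by
  classical
  let default : V → V := fun u => if hu : u = x then x else (hG.exists_isBFSParent hu).choose
  refine ⟨Function.extend v w default, fun u hu => ?_, fun i => hv.extend_apply w default i⟩
  by_cases h : ∃ i, v i = u
  · obtain ⟨i, rfl⟩ := h
    rw [hv.extend_apply]
    exact hvw i
  · rw [Function.extend_apply' _ _ _ h]
    simpa [default, hu] using (hG.exists_isBFSParent hu).choose_spec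

namespace IsBFSParentMap

variable {x : V} {par : V → V}

lemma parentGraph_adj (hpar : G.IsBFSParentMap x par) {v : V} (hv : v ≠ x) :
    (parentGraph x par).Adj v (par v) :=
  ⟨(hpar v hv).1.ne, .inl ⟨hv, rfl⟩⟩

lemma parentGraph_le (hpar : G.IsBFSParentMap x par) : parentGraph x par ≤ G := by
  rintro u w ⟨-, ⟨hu, rfl⟩ | ⟨hw, rfl⟩⟩
  · exact (hpar u hu).1
  · exact (hpar w hw).1.symm

lemma exists_parentGraph_walk (hpar : G.IsBFSParentMap x par) (v : V) :
    ∃ p : (parentGraph x par).Walk v x, p.length = G.dist x v := by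
  induction h : G.dist x v using Nat.strong_induction_on generalizing v with
  | _ n ih =>
  by_cases hv : v = x
  · subst hv
    exact ⟨.nil, by simp_all⟩
  · obtain ⟨p, hp⟩ := ih _ (by have := (hpar v hv).2; omega) (par v) rfl
    refine ⟨.cons (hpar.parentGraph_adj hv) p, ?_⟩
    have := (hpar v hv).2
    simp only [Walk.length_cons]
    omega

lemma parentGraph_isAcyclic (hpar : G.IsBFSParentMap x par) : (parentGraph x par).IsAcyclic := by
  have hedge : ∀ ⦃u w⦄, (parentGraph x par).Adj u w →
      (u ≠ x ∧ w = par u ∧ G.dist x w + 1 = G.dist x u) ∨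
      (w ≠ x ∧ u = par w ∧ G.dist x u + 1 = G.dist x w) := by
    rintro u w ⟨-, ⟨hu, rfl⟩ | ⟨hw, rfl⟩⟩
    · exact .inl ⟨hu, rfl, (hpar u hu).2⟩
    · exact .inr ⟨hw, rfl, (hpar w hw).2⟩
  refine isAcyclic_of_unique_lower_neighbor (G.dist x) (fun u w huw => ?_)
    (fun u w w' huw huw' hw hw' => ?_)
  · rcases hedge huw with ⟨-, -, h⟩ | ⟨-, -, h⟩ <;> omega
  · rcases hedge huw with ⟨-, rfl, -⟩ | ⟨-, -, h⟩ <;>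
      rcases hedge huw' with ⟨-, rfl, -⟩ | ⟨-, -, h'⟩
    all_goals first | rfl | omega

theorem isBFSTree_parentGraph (hpar : G.IsBFSParentMap x par) :
    IsBFSTree G (parentGraph x par) x := by
  have hle := hpar.parentGraph_le
  have hreach : ∀ v, (parentGraph x par).Reachable x v := fun v =>
    (hpar.exists_parentGraph_walk v).elim fun p _ => ⟨p.reverse⟩
  refine ⟨hle, ⟨(connected_iff_exists_forall_reachable _).mpr ⟨x, hreach⟩,
    hpar.parentGraph_isAcyclic⟩,
    fun v => le_antisymm ?_ ((hreach v).dist_anti hle)⟩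
  obtain ⟨p, hp⟩ := hpar.exists_parentGraph_walk v
  simpa [hp] using dist_le p.reverse

end IsBFSParentMap

namespace Walk

variable {x u v : V}

def IsGeodesicFromStart (c : G.Walk x x) : Prop :=
  ∀ i ≤ c.length, G.dist x (c.getVert i) = min i (c.length - i)

lemma IsCycle.exists_isBFSParentMap (hG : G.Connected) {c : G.Walk x x} (hc : c.IsCycle)
    (hgeo : c.IsGeodesicFromStart) :
    ∃ par, G.IsBFSParentMap x par ∧ ∀ j, 0 < j → j < c.length →
      par (c.getVert j) = c.getVert (if j ≤ c.length / 2 then j - 1 else j + 1) := by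
  let v : {j : ℕ // 0 < j ∧ j < c.length} → V := fun j => c.getVert j
  have hinj : v.Injective := fun i j h => Subtype.ext <|
    hc.getVert_injOn ⟨i.2.1, i.2.2.le⟩ ⟨j.2.1, j.2.2.le⟩ h
  have hvalid : ∀ j, 0 < j → j < c.length → G.IsBFSParent x (c.getVert j)
      (c.getVert (if j ≤ c.length / 2 then j - 1 else j + 1)) := by
    intro j hj0 hjm
    have hdj := hgeo j hjm.le
    split_ifs with hj
    · have hadj := c.adj_getVert_succ (i := j - 1) (by omega)
      rw [Nat.sub_add_cancel hj0] at hadj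
      exact ⟨hadj.symm, by have := hgeo (j - 1) (by omega); omega⟩
    · exact ⟨c.adj_getVert_succ hjm, by have := hgeo (j + 1) (by omega); omega⟩
  obtain ⟨par, hpar, heq⟩ :=
    hG.exists_isBFSParentMap_extend hinj fun j => hvalid j.1 j.2.1 j.2.2
  exact ⟨par, hpar, fun j hj0 hjm => heq ⟨j, hj0, hjm⟩⟩

theorem IsCycle.exists_isBFSTree_isFundCycle (hG : G.Connected) {c : G.Walk x x}
    (hc : c.IsCycle) (hgeo : c.IsGeodesicFromStart) :
    ∃ T, IsBFSTree G T x ∧ ∃ e, IsFundCycle G T c e := by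
  obtain ⟨par, hpar, hparc⟩ := hc.exists_isBFSParentMap hG hgeo
  have hm := hc.three_le_length
  set m := c.length
  set t := m / 2
  have hne : ∀ j, 0 < j → j < m → c.getVert j ≠ x := fun j hj0 hjm h => by
    have := (hc.getVert_endpoint_iff hjm.le).mp h
    omega
  have htree : ∀ i < m, i ≠ t →
      s(c.getVert i, c.getVert (i + 1)) ∈ (parentGraph x par).edgeSet := by
    intro i him hit
    by_cases hi : i < t
    · have := hpar.parentGraph_adj (hne (i + 1) (by omega) (by omega))
      rw [hparc (i + 1) (by omega) (by omega), if_pos (by omega), Nat.add_sub_cancel] at this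
      exact Sym2.eq_swap ▸ this
    · have := hpar.parentGraph_adj (hne i (by omega) (by omega))
      rwa [hparc i (by omega) (by omega), if_neg (by omega)] at this
  have hnot : s(c.getVert t, c.getVert (t + 1)) ∉ (parentGraph x par).edgeSet := by
    rintro ⟨-, ⟨-, h⟩ | ⟨-, h⟩⟩
    · rw [hparc t (by omega) (by omega), if_pos le_rfl] at h
      exact hc.getVert_sub_one_ne_getVert_add_one (i := t) (by omega) h.symm
    · rw [hparc (t + 1) (by omega) (by omega), if_neg (by omega)] at h
      exact hc.getVert_sub_one_ne_getVert_add_one (i := t + 1) (by omega) h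
  refine ⟨_, hpar.isBFSTree_parentGraph, _, hc, c.adj_getVert_succ (by omega), hnot,
    c.mk_mem_edges_iff_exists.mpr ⟨t, by omega, rfl⟩, fun f hf => ?_⟩
  induction f using Sym2.ind with
  | _ u w =>
  obtain ⟨i, him, hi⟩ := c.mk_mem_edges_iff_exists.mp hf
  rw [← hi]
  by_cases hit : i = t
  · exact .inl (hit ▸ rfl)
  · exact .inr (htree i him hit)

lemma IsPath.start_notMem_support_tail {p : G.Walk u v} (hp : p.IsPath) :
    u ∉ p.support.tail := by
  have := hp.support_nodup
  rw [← p.cons_tail_support] at this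
  exact (List.nodup_cons.mp this).1

structure IsShortcut (Z : G.Walk u u) (d : ℕ) (p : G.Walk u (Z.getVert d)) : Prop where
  isPath : p.IsPath
  length_lt : p.length < d
  length_lt_sub : p.length < Z.length - d
  eq_or_eq_of_mem_support : ∀ w ∈ p.support, w ∈ Z.support → w = u ∨ w = Z.getVert d

namespace IsShortcut

variable {Z : G.Walk u u} {d : ℕ} {p : G.Walk u (Z.getVert d)}

lemma length_pos (hZ : Z.IsCycle) (hp : Z.IsShortcut d p) : 0 < p.length := by
  have := hp.length_lt
  have := hp.length_lt_sub
  by_contra h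
  have := (hZ.getVert_endpoint_iff (i := d) (by omega)).mp
    (p.eq_of_length_eq_zero (by omega)).symm
  omega

lemma edges_disjoint (hZ : Z.IsCycle) (hp : Z.IsShortcut d p) : p.edges.Disjoint Z.edges := by
  -- A shared edge joins the ends of `p`, so `p` and one of the two arcs of `Z` are that edge.
  have := hp.length_lt
  have := hp.length_lt_sub
  intro e hep heZ
  have hends : ∀ w ∈ e, w = u ∨ w = Z.getVert d := fun w hw =>
    hp.eq_or_eq_of_mem_support w (mem_support_of_mem_edges hep hw)
      (mem_support_of_mem_edges heZ hw)
  induction e using Sym2.ind with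
  | _ a b =>
  have hab := p.adj_of_mem_edges hep
  have he : s(a, b) = s(u, Z.getVert d) := by
    have ha := hends a (Sym2.mem_mk_left a b)
    have hb := hends b (Sym2.mem_mk_right a b)
    rcases ha with rfl | rfl <;> rcases hb with rfl | rfl <;> simp_all [Sym2.eq_swap]
  rw [he] at hep heZ
  have hp1 := hp.isPath.length_eq_one_of_mem_edges hep
  have hsplit : s(u, Z.getVert d) ∈ (Z.take d).edges ++ (Z.drop d).edges := by
    rw [← edges_append, Z.append_take_drop_eq]
    exact heZ
  rcases List.mem_append.mp hsplit with h | h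
  · have := (hZ.isPath_take (by omega)).length_eq_one_of_mem_edges h
    rw [take_length] at this
    omega
  · have := (hZ.isPath_drop (by omega)).length_eq_one_of_mem_edges (Sym2.eq_swap ▸ h)
    rw [drop_length] at this
    omega

lemma isCycle_take_append (hZ : Z.IsCycle) (hp : Z.IsShortcut d p) :
    ((Z.take d).append p.reverse).IsCycle := by
  have := hp.length_lt
  have := hp.length_lt_sub
  have := hp.length_pos hZ
  have hpath := hZ.isPath_take (n := d) (by omega)
  refine hpath.isCycle_append hp.isPath.reverse (fun w hw hw' => ?_)
    (.inl (by rw [take_length]; omega))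
  have hwZ : w ∈ Z.support := by
    rw [support_take] at hw
    exact List.mem_of_mem_take (List.mem_of_mem_tail hw)
  have hwp : w ∈ p.support := by simpa using List.mem_of_mem_tail hw'
  rcases hp.eq_or_eq_of_mem_support w hwp hwZ with rfl | rfl
  · exact hpath.start_notMem_support_tail hw
  · exact hp.isPath.reverse.start_notMem_support_tail hw'

lemma isCycle_append_drop (hZ : Z.IsCycle) (hp : Z.IsShortcut d p) :
    (p.append (Z.drop d)).IsCycle := by
  have := hp.length_lt
  have := hp.length_lt_sub
  have := hp.length_pos hZ
  have hpath := hZ.isPath_drop (n := d) (by omega)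
  refine hp.isPath.isCycle_append hpath (fun w hw hw' => ?_) (.inr (by rw [drop_length]; omega))
  have hwZ : w ∈ Z.support := by
    rw [drop_support_eq_support_drop_min] at hw'
    exact List.mem_of_mem_drop (List.mem_of_mem_tail hw')
  rcases hp.eq_or_eq_of_mem_support w (List.mem_of_mem_tail hw) hwZ with rfl | rfl
  · exact hp.isPath.start_notMem_support_tail hw
  · exact hpath.start_notMem_support_tail hw'

lemma edges_eq_symmDiff (hZ : Z.IsCycle) (hp : Z.IsShortcut d p) :
    {e | e ∈ Z.edges} = symmDiff {e | e ∈ ((Z.take d).append p.reverse).edges}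
      {e | e ∈ (p.append (Z.drop d)).edges} := by
  have hsplit : Z.edges = (Z.take d).edges ++ (Z.drop d).edges := by
    rw [← edges_append, Z.append_take_drop_eq]
  have htd : (Z.take d).edges.Disjoint (Z.drop d).edges :=
    List.disjoint_of_nodup_append (hsplit ▸ hZ.edges_nodup)
  have hpZ := hp.edges_disjoint hZ
  ext e
  simp only [Set.mem_ofPred_eq, Set.mem_symmDiff, edges_append, List.mem_append, edges_reverse,
    List.mem_reverse, hsplit]
  have := @htd e
  have := @hpZ e
  rw [hsplit, List.mem_append] at this
  tauto

end IsShortcut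

lemma IsCycle.idxOf_getVert [DecidableEq V] {c : G.Walk x x} (hc : c.IsCycle) {a : ℕ}
    (ha : a < c.length) : c.support.idxOf (c.getVert a) = a := by
  have hmem := c.getVert_mem_support a
  have hk := c.getVert_support_idxOf hmem
  have hlt := List.idxOf_lt_length_iff.mpr hmem
  rw [length_support] at hlt
  by_cases hkm : c.support.idxOf (c.getVert a) = c.length
  · rw [hkm, getVert_length] at hk
    rw [← hk, ← c.cons_tail_support, List.idxOf_cons_self] at hkm
    have := hc.three_le_length
    omega
  · exact hc.getVert_injOn' (by simp only [Set.mem_ofPred_eq]; omega)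
      (by simp only [Set.mem_ofPred_eq]; omega) hk

lemma IsCycle.getVert_rotate [DecidableEq V] {c : G.Walk x x} (hc : c.IsCycle) {a i : ℕ}
    (ha : a < c.length) (hi : i ≤ c.length - a) :
    (c.rotate (c.getVert a) (c.getVert_mem_support a)).getVert i = c.getVert (a + i) := by
  rw [rotate, getVert_append', if_pos (by rw [length_dropUntil, hc.idxOf_getVert ha]; exact hi),
    dropUntil_eq_drop, getVert_copy, drop_getVert, hc.idxOf_getVert ha]

structure IsShortestChord (c : G.Walk x x) (a b : ℕ) (q : G.Walk (c.getVert a) (c.getVert b)) :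
    Prop where
  left_lt : a < c.length
  right_lt : b < c.length
  length_lt : q.length < Nat.cyclicDist c.length a b
  le_of_length_lt : ∀ a' b' (q' : G.Walk (c.getVert a') (c.getVert b')), a' < c.length →
    b' < c.length → q'.length < q.length → Nat.cyclicDist c.length a' b' ≤ q'.length

namespace IsShortestChord

variable {c : G.Walk x x} {a b : ℕ} {q : G.Walk (c.getVert a) (c.getVert b)}

lemma reverse (hq : c.IsShortestChord a b q) : c.IsShortestChord b a q.reverse :=
  ⟨hq.right_lt, hq.left_lt, by simpa [Nat.cyclicDist_comm] using hq.length_lt,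
    fun a' b' q' ha' hb' hlt => hq.le_of_length_lt a' b' q' ha' hb' (by simpa using hlt)⟩

lemma isPath [DecidableEq V] (hq : c.IsShortestChord a b q) : q.IsPath := by
  have hle : q.length ≤ q.bypass.length := by
    by_contra! h
    have := hq.le_of_length_lt a b q.bypass hq.left_lt hq.right_lt h
    have := hq.length_lt
    omega
  exact bypass_eq_self_of_length_le_length_bypass q hle ▸ q.bypass_isPath

lemma eq_or_eq_of_mem_support (hq : c.IsShortestChord a b q) {w : V} (hwq : w ∈ q.support)
    (hwc : w ∈ c.support) : w = c.getVert a ∨ w = c.getVert b := by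
  classical
  by_contra! hw
  obtain ⟨j, hj, hjm⟩ : ∃ j, c.getVert j = w ∧ j < c.length := by
    obtain ⟨j, rfl, hj⟩ := mem_support_iff_exists_getVert.mp hwc
    rcases hj.lt_or_eq with hj | rfl
    · exact ⟨j, rfl, hj⟩
    · exact ⟨0, by simp, by have := hq.left_lt; omega⟩
  subst hj
  have hsplit := congrArg length (q.take_spec hwq)
  rw [length_append] at hsplit
  have h₁ := hq.le_of_length_lt a j (q.takeUntil _ hwq) hq.left_lt hjm
    (q.length_takeUntil_lt_length hwq hw.2)
  have h₂ := hq.le_of_length_lt j b (q.dropUntil _ hwq) hjm hq.right_lt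
    (q.length_dropUntil_lt_length hwq hw.1)
  have := Nat.cyclicDist_triangle (m := c.length) hq.left_lt.le hjm.le hq.right_lt.le (b := j)
  have := hq.length_lt
  omega

end IsShortestChord

lemma exists_isShortestChord {c : G.Walk x x} {a b : ℕ} (ha : a < c.length) (hb : b < c.length)
    (q : G.Walk (c.getVert a) (c.getVert b)) (hq : q.length < Nat.cyclicDist c.length a b) :
    ∃ a b q, c.IsShortestChord a b q := by
  classical
  have hex : ∃ ℓ, ∃ (a b : ℕ) (q : G.Walk (c.getVert a) (c.getVert b)), a < c.length ∧
      b < c.length ∧ q.length = ℓ ∧ ℓ < Nat.cyclicDist c.length a b :=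
    ⟨_, a, b, q, ha, hb, rfl, hq⟩
  obtain ⟨a, b, q, ha, hb, hℓ, hlt⟩ := Nat.find_spec hex
  refine ⟨a, b, q, ha, hb, hℓ ▸ hlt, fun a' b' q' ha' hb' hlt' => ?_⟩
  by_contra! h
  exact Nat.find_min hex (hℓ ▸ hlt') ⟨a', b', q', ha', hb', rfl, h⟩

lemma dist_getVert_le (c : G.Walk x x) {i : ℕ} (hi : i ≤ c.length) :
    G.dist x (c.getVert i) ≤ min i (c.length - i) := by
  have h₁ := dist_le (c.take i)
  have h₂ := dist_le (c.drop i).reverse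
  simp only [take_length, length_reverse, drop_length] at h₁ h₂
  omega

lemma exists_isShortestChord_of_not_isGeodesicFromStart {c : G.Walk x x}
    (hng : ¬ c.IsGeodesicFromStart) : ∃ a b q, c.IsShortestChord a b q := by
  simp only [IsGeodesicFromStart, not_forall] at hng
  obtain ⟨i, hi, hne⟩ := hng
  have hlt := (c.dist_getVert_le hi).lt_of_ne hne
  obtain ⟨q, hq⟩ := (c.take i).reachable.exists_walk_length_eq_dist
  refine exists_isShortestChord (a := 0) (b := i) (by omega) (by omega)
    (q.copy c.getVert_zero.symm rfl) ?_
  rw [length_copy, hq, Nat.cyclicDist_of_lt (by omega)]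
  simpa using hlt

lemma IsShortestChord.isShortcut_rotate [DecidableEq V] {c : G.Walk x x} (hc : c.IsCycle)
    {a b : ℕ} {q : G.Walk (c.getVert a) (c.getVert b)} (hq : c.IsShortestChord a b q)
    (hab : a < b) :
    ∃ p, (c.rotate (c.getVert a) (c.getVert_mem_support a)).IsShortcut (b - a) p := by
  have hb : (c.rotate _ (c.getVert_mem_support a)).getVert (b - a) = c.getVert b := by
    rw [hc.getVert_rotate hq.left_lt (by have := hq.right_lt; omega), Nat.add_sub_cancel' hab.le]
  have hlt := hq.length_lt
  rw [Nat.cyclicDist_of_lt hab] at hlt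
  refine ⟨q.copy rfl hb.symm, by simpa using hq.isPath, by rw [length_copy]; omega,
    by rw [length_copy, length_rotate]; omega, fun w hwq hwc => ?_⟩
  rw [hb]
  exact hq.eq_or_eq_of_mem_support (by simpa using hwq) (by simpa using hwc)

theorem IsCycle.exists_isShortcut_rotate [DecidableEq V] {c : G.Walk x x} (hc : c.IsCycle)
    (hng : ¬ c.IsGeodesicFromStart) :
    ∃ w hw d p, (c.rotate w hw).IsShortcut d p := by
  obtain ⟨a, b, q, hq⟩ := exists_isShortestChord_of_not_isGeodesicFromStart hng
  rcases lt_trichotomy a b with hab | rfl | hba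
  · exact ⟨_, _, _, hq.isShortcut_rotate hc hab⟩
  · have := hq.length_lt
    simp [Nat.cyclicDist] at this
  · exact ⟨_, _, _, hq.reverse.isShortcut_rotate hc hba⟩

theorem IsCycle.exists_edges_eq_symmDiff_of_not_isGeodesicFromStart {c : G.Walk x x}
    (hc : c.IsCycle) (hng : ¬ c.IsGeodesicFromStart) :
    ∃ (b₁ b₂ : V) (c₁ : G.Walk b₁ b₁) (c₂ : G.Walk b₂ b₂), c₁.IsCycle ∧ c₂.IsCycle ∧
      c₁.length < c.length ∧ c₂.length < c.length ∧
      c₁.length + c₂.length ≡ c.length [MOD 2] ∧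
      {e | e ∈ c.edges} = symmDiff {e | e ∈ c₁.edges} {e | e ∈ c₂.edges} := by
  classical
  obtain ⟨w, hw, d, p, hp⟩ := hc.exists_isShortcut_rotate hng
  have hZ := hc.rotate hw
  have := hp.length_lt
  have := hp.length_lt_sub
  refine ⟨_, _, _, _, hp.isCycle_take_append hZ, hp.isCycle_append_drop hZ, ?_, ?_, ?_, ?_⟩
  · simp only [length_append, take_length, length_reverse, length_rotate] at *
    omega
  · simp only [length_append, drop_length, length_rotate] at *
    omega
  · simp only [Nat.ModEq, length_append, take_length, length_reverse, drop_length,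
      length_rotate] at *
    omega
  · rw [← hp.edges_eq_symmDiff hZ]
    ext e
    exact (rotate_edges c w hw).mem_iff.symm

theorem IsCycle.isGeodesicFromStart_of_length_lt {n : ℕ}
    (hmin : ∀ (b : V) (w : G.Walk b b), w.IsCycle → Even w.length → n ≤ w.length)
    {c : G.Walk x x} (hc : c.IsCycle) (hlt : c.length < n) : c.IsGeodesicFromStart := by
  by_contra hng
  obtain ⟨_, _, c₁, c₂, hc₁, hc₂, hlt₁, hlt₂, hmod, -⟩ :=
    hc.exists_edges_eq_symmDiff_of_not_isGeodesicFromStart hng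
  have := mt (hmin _ c hc)
  have := mt (hmin _ c₁ hc₁)
  have := mt (hmin _ c₂ hc₂)
  simp only [Nat.even_iff, Nat.ModEq] at *
  omega

end Walk

end SimpleGraph

theorem shortest_even_cycle_structure_general
    {V : Type*} (G : SimpleGraph V) (hG : G.Connected)
    {a : V} (c : G.Walk a a) (hc : c.IsCycle)
    (hmin : ∀ (b : V) (w : G.Walk b b), w.IsCycle → Even w.length → c.length ≤ w.length) :
    (∃ x ∈ c.support, ∃ T : SimpleGraph V, IsBFSTree G T x ∧
        ∃ e : Sym2 V, IsFundCycle G T c e) ∨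
    (∃ (x y : V) (T₁ T₂ : SimpleGraph V) (b₁ b₂ : V)
        (c₁ : G.Walk b₁ b₁) (c₂ : G.Walk b₂ b₂) (e₁ e₂ : Sym2 V),
      IsBFSTree G T₁ x ∧ IsBFSTree G T₂ y ∧
      IsFundCycle G T₁ c₁ e₁ ∧ IsFundCycle G T₂ c₂ e₂ ∧
      {e | e ∈ c.edges} = symmDiff {e | e ∈ c₁.edges} {e | e ∈ c₂.edges}) := by
  by_cases hgeo : c.IsGeodesicFromStart
  · exact .inl ⟨a, c.start_mem_support, hc.exists_isBFSTree_isFundCycle hG hgeo⟩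
  obtain ⟨b₁, b₂, c₁, c₂, hc₁, hc₂, hlt₁, hlt₂, -, hsymm⟩ :=
    hc.exists_edges_eq_symmDiff_of_not_isGeodesicFromStart hgeo
  obtain ⟨T₁, hT₁, e₁, he₁⟩ :=
    hc₁.exists_isBFSTree_isFundCycle hG (hc₁.isGeodesicFromStart_of_length_lt hmin hlt₁)
  obtain ⟨T₂, hT₂, e₂, he₂⟩ :=
    hc₂.exists_isBFSTree_isFundCycle hG (hc₂.isGeodesicFromStart_of_length_lt hmin hlt₂)
  exact .inr ⟨b₁, b₂, T₁, T₂, b₁, b₂, c₁, c₂, e₁, e₂, hT₁, hT₂, he₁, he₂, hsymm⟩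

/-- Every shortest even cycle of a connected graph is either a fundamental cycle of a BFS
tree rooted at one of its vertices, or the edge-symmetric-difference of two fundamental
cycles of BFS trees. -/
theorem shortest_even_cycle_structure
    {V : Type*} [Fintype V] (G : SimpleGraph V) (hG : G.Connected)
    {a : V} (c : G.Walk a a) (hc : c.IsCycle) (heven : Even c.length)
    (hmin : ∀ (b : V) (w : G.Walk b b), w.IsCycle → Even w.length → c.length ≤ w.length) :
    (∃ x ∈ c.support, ∃ T : SimpleGraph V, IsBFSTree G T x ∧
        ∃ e : Sym2 V, IsFundCycle G T c e) ∨
    (∃ (x y : V) (T₁ T₂ : SimpleGraph V) (b₁ b₂ : V)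
        (c₁ : G.Walk b₁ b₁) (c₂ : G.Walk b₂ b₂) (e₁ e₂ : Sym2 V),
      IsBFSTree G T₁ x ∧ IsBFSTree G T₂ y ∧
      IsFundCycle G T₁ c₁ e₁ ∧ IsFundCycle G T₂ c₂ e₂ ∧
      {e | e ∈ c.edges} = symmDiff {e | e ∈ c₁.edges} {e | e ∈ c₂.edges}) :=
  shortest_even_cycle_structure_general G hG c hc hmin
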